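/- With notation as in Section 4, B([X,Y]₂, [X,Y]₂) = −2·Σ_{i∈{2,3,4}, j∈{1,...,4}} (a_i d_j − c_i b_j)² + B([X₁,Y₁], [X₂,Y₂]₁). In particular B([X,Y]₂,[X,Y]₂) ≤ −2z² + 4xy where z² = Σ_{i,j}(a_i d_j − c_i b_j)², x,y as before. -/

import Mathlib

/-!
In the coordinates `a, c ∈ ℝ³` of `𝔥₁ ≅ 𝔰𝔲(2)` and `b, d ∈ ℝ⁴` of `𝔥₂ ≅ ℂ²`, the bracket on `𝔥₁`
is twice the cross product, `[𝔥₁, 𝔥₂] ⊆ 𝔥₂` is bilinear, and `[𝔥₂, 𝔥₂] ⊆ 𝔥₀ ⊕ 𝔥₁` has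
coordinates linear in the Plücker coordinates `pᵢⱼ = bᵢdⱼ - bⱼdᵢ`. The form `B` is `2⟨·,·⟩` on
`𝔥₁`, `-2⟨·,·⟩` on `𝔥₂`, and `𝔥₀ ⊥ 𝔥₁`, so `Z₀` drops out and the identity becomes a polynomial
identity. For the bound, the Plücker relation `p₁₂p₃₄ - p₁₃p₂₄ + p₁₄p₂₃ = 0` makes the
`𝔥₁`-coordinates of `[X₂,Y₂]` a vector of length `|p|`, and Cauchy–Schwarz finishes.
-/

open Complex Matrix

/-- Basis elements of `𝔰𝔲(2,1)` as in Section 4 of the paper. -/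
noncomputable def e1 : Matrix (Fin 3) (Fin 3) ℂ := !![I, 0, 0; 0, I, 0; 0, 0, -2*I]
noncomputable def e2 : Matrix (Fin 3) (Fin 3) ℂ := !![I, 0, 0; 0, -I, 0; 0, 0, 0]
noncomputable def e3 : Matrix (Fin 3) (Fin 3) ℂ := !![0, 1, 0; -1, 0, 0; 0, 0, 0]
noncomputable def e4 : Matrix (Fin 3) (Fin 3) ℂ := !![0, I, 0; I, 0, 0; 0, 0, 0]
noncomputable def f1 : Matrix (Fin 3) (Fin 3) ℂ := !![0, 0, 1; 0, 0, 0; 1, 0, 0]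
noncomputable def f2 : Matrix (Fin 3) (Fin 3) ℂ := !![0, 0, 0; 0, 0, 1; 0, 1, 0]
noncomputable def f3 : Matrix (Fin 3) (Fin 3) ℂ := !![0, 0, I; 0, 0, 0; -I, 0, 0]
noncomputable def f4 : Matrix (Fin 3) (Fin 3) ℂ := !![0, 0, 0; 0, 0, I; 0, -I, 0]

/-- `𝔥₀ = span_ℝ{e₁}`. -/
noncomputable def h0 : Submodule ℝ (Matrix (Fin 3) (Fin 3) ℂ) := Submodule.span ℝ {e1}
/-- `𝔥₁ = span_ℝ{e₂,e₃,e₄}`. -/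
noncomputable def h1 : Submodule ℝ (Matrix (Fin 3) (Fin 3) ℂ) :=
  Submodule.span ℝ {e2, e3, e4}
/-- `𝔥₂ = span_ℝ{f₁,f₂,f₃,f₄}`. -/
noncomputable def h2 : Submodule ℝ (Matrix (Fin 3) (Fin 3) ℂ) :=
  Submodule.span ℝ {f1, f2, f3, f4}

/-- The form `B(X,Y) = -Re tr(XY)`. -/
noncomputable def Bform (X Y : Matrix (Fin 3) (Fin 3) ℂ) : ℝ :=
  -(Matrix.trace (X * Y)).re

noncomputable def h1Elem (a2 a3 a4 : ℝ) : Matrix (Fin 3) (Fin 3) ℂ := a2 • e2 + a3 • e3 + a4 • e4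

noncomputable def h2Elem (b1 b2 b3 b4 : ℝ) : Matrix (Fin 3) (Fin 3) ℂ :=
  b1 • f1 + b2 • f2 + b3 • f3 + b4 • f4

lemma Bform_add_right (X Y Y' : Matrix (Fin 3) (Fin 3) ℂ) :
    Bform X (Y + Y') = Bform X Y + Bform X Y' := by
  simp only [Bform, Matrix.mul_add, Matrix.trace_add, Complex.add_re, neg_add]

lemma Bform_smul_right (X Y : Matrix (Fin 3) (Fin 3) ℂ) (t : ℝ) :
    Bform X (t • Y) = t * Bform X Y := by
  simp [Bform, Matrix.trace_smul, Complex.real_smul]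

lemma h1Elem_eq (a2 a3 a4 : ℝ) :
    h1Elem a2 a3 a4 = !![a2 * I, a3 + a4 * I, 0; -a3 + a4 * I, -(a2 * I), 0; 0, 0, 0] := by
  ext i j
  fin_cases i <;> fin_cases j <;> simp [h1Elem, e2, e3, e4]

lemma h2Elem_eq (b1 b2 b3 b4 : ℝ) :
    h2Elem b1 b2 b3 b4
      = !![0, 0, b1 + b3 * I; 0, 0, b2 + b4 * I; b1 - b3 * I, b2 - b4 * I, 0] := by
  ext i j
  fin_cases i <;> fin_cases j <;> simp [h2Elem, f1, f2, f3, f4, sub_eq_add_neg]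

lemma h2Elem_sub (b1 b2 b3 b4 d1 d2 d3 d4 : ℝ) :
    h2Elem b1 b2 b3 b4 - h2Elem d1 d2 d3 d4 = h2Elem (b1 - d1) (b2 - d2) (b3 - d3) (b4 - d4) := by
  simp only [h2Elem, sub_smul]
  abel

lemma lie_h1Elem_h1Elem (a2 a3 a4 c2 c3 c4 : ℝ) :
    ⁅h1Elem a2 a3 a4, h1Elem c2 c3 c4⁆
      = h1Elem (2 * (a3*c4 - a4*c3)) (2 * (a4*c2 - a2*c4)) (2 * (a2*c3 - a3*c2)) := by
  rw [Ring.lie_def, h1Elem_eq, h1Elem_eq, h1Elem_eq]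
  ext i j
  fin_cases i <;> fin_cases j <;> simp [Complex.ext_iff] <;> ring_nf <;> simp

lemma lie_h1Elem_h2Elem (a2 a3 a4 d1 d2 d3 d4 : ℝ) :
    ⁅h1Elem a2 a3 a4, h2Elem d1 d2 d3 d4⁆
      = h2Elem (a3*d2 - a2*d3 - a4*d4) (a2*d4 - a3*d1 - a4*d3)
          (a2*d1 + a3*d4 + a4*d2) (a4*d1 - a2*d2 - a3*d3) := by
  rw [Ring.lie_def, h1Elem_eq, h2Elem_eq, h2Elem_eq]
  ext i j
  fin_cases i <;> fin_cases j <;> simp [Complex.ext_iff] <;> ring_nf <;> simp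

lemma lie_h2Elem_h2Elem (b1 b2 b3 b4 d1 d2 d3 d4 : ℝ) :
    ⁅h2Elem b1 b2 b3 b4, h2Elem d1 d2 d3 d4⁆
      = (-((b1*d3 - b3*d1) + (b2*d4 - b4*d2))) • e1
        + h1Elem ((b2*d4 - b4*d2) - (b1*d3 - b3*d1)) ((b1*d2 - b2*d1) + (b3*d4 - b4*d3))
            (-((b1*d4 - b4*d1) + (b2*d3 - b3*d2))) := by
  rw [Ring.lie_def, h1Elem_eq, h2Elem_eq, h2Elem_eq, e1]
  ext i j
  fin_cases i <;> fin_cases j <;> simp [Complex.ext_iff] <;> ring_nf <;> simp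

lemma Bform_h1Elem_e1 (a2 a3 a4 : ℝ) : Bform (h1Elem a2 a3 a4) e1 = 0 := by
  simp [Bform, h1Elem_eq, e1, Matrix.trace_fin_three]

lemma Bform_h1Elem_of_mem_h0 (a2 a3 a4 : ℝ) {Z : Matrix (Fin 3) (Fin 3) ℂ} (hZ : Z ∈ h0) :
    Bform (h1Elem a2 a3 a4) Z = 0 := by
  obtain ⟨t, rfl⟩ := Submodule.mem_span_singleton.mp hZ
  rw [Bform_smul_right, Bform_h1Elem_e1, mul_zero]

lemma Bform_h1Elem_h1Elem (a2 a3 a4 c2 c3 c4 : ℝ) :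
    Bform (h1Elem a2 a3 a4) (h1Elem c2 c3 c4) = 2 * (a2*c2 + a3*c3 + a4*c4) := by
  simp [Bform, h1Elem_eq, Matrix.trace_fin_three]
  ring

lemma Bform_h2Elem_h2Elem (b1 b2 b3 b4 d1 d2 d3 d4 : ℝ) :
    Bform (h2Elem b1 b2 b3 b4) (h2Elem d1 d2 d3 d4) = -2 * (b1*d1 + b2*d2 + b3*d3 + b4*d4) := by
  simp [Bform, h2Elem_eq, Matrix.trace_fin_three]
  ring

lemma Bform_lie_h1Elem_lie_h2Elem (a2 a3 a4 c2 c3 c4 b1 b2 b3 b4 d1 d2 d3 d4 : ℝ) :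
    Bform ⁅h1Elem a2 a3 a4, h1Elem c2 c3 c4⁆ ⁅h2Elem b1 b2 b3 b4, h2Elem d1 d2 d3 d4⁆
      = -4 * ((a2*c3 - a3*c2) * ((b1*d4 - b4*d1) + (b2*d3 - b3*d2))
          + (a2*c4 - a4*c2) * ((b1*d2 - b2*d1) + (b3*d4 - b4*d3))
          + (a3*c4 - a4*c3) * ((b1*d3 - b3*d1) - (b2*d4 - b4*d2))) := by
  rw [lie_h1Elem_h1Elem, lie_h2Elem_h2Elem, Bform_add_right, Bform_smul_right, Bform_h1Elem_e1,
    Bform_h1Elem_h1Elem]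
  ring

lemma Bform_h2Component_self (a2 a3 a4 c2 c3 c4 b1 b2 b3 b4 d1 d2 d3 d4 : ℝ) :
    Bform (⁅h1Elem a2 a3 a4, h2Elem d1 d2 d3 d4⁆ + ⁅h2Elem b1 b2 b3 b4, h1Elem c2 c3 c4⁆)
        (⁅h1Elem a2 a3 a4, h2Elem d1 d2 d3 d4⁆ + ⁅h2Elem b1 b2 b3 b4, h1Elem c2 c3 c4⁆)
      = -2 * ((a2*d1 - c2*b1)^2 + (a2*d2 - c2*b2)^2 + (a2*d3 - c2*b3)^2
            + (a2*d4 - c2*b4)^2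
            + (a3*d1 - c3*b1)^2 + (a3*d2 - c3*b2)^2 + (a3*d3 - c3*b3)^2
            + (a3*d4 - c3*b4)^2
            + (a4*d1 - c4*b1)^2 + (a4*d2 - c4*b2)^2 + (a4*d3 - c4*b3)^2
            + (a4*d4 - c4*b4)^2)
        + Bform ⁅h1Elem a2 a3 a4, h1Elem c2 c3 c4⁆ ⁅h2Elem b1 b2 b3 b4, h2Elem d1 d2 d3 d4⁆ := by
  have hskew : ⁅h2Elem b1 b2 b3 b4, h1Elem c2 c3 c4⁆ = -⁅h1Elem c2 c3 c4, h2Elem b1 b2 b3 b4⁆ :=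
    (neg_sub _ _).symm
  rw [hskew, ← sub_eq_add_neg, lie_h1Elem_h2Elem, lie_h1Elem_h2Elem, h2Elem_sub,
    Bform_h2Elem_h2Elem, Bform_lie_h1Elem_lie_h2Elem]
  ring

lemma plucker_relation (b1 b2 b3 b4 d1 d2 d3 d4 : ℝ) :
    (b1*d2 - b2*d1) * (b3*d4 - b4*d3) - (b1*d3 - b3*d1) * (b2*d4 - b4*d2)
      + (b1*d4 - b4*d1) * (b2*d3 - b3*d2) = 0 := by
  ring

lemma abs_inner_le_of_plucker (u1 u2 u3 : ℝ) {p12 p13 p14 p23 p24 p34 : ℝ}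
    (h : p12 * p34 - p13 * p24 + p14 * p23 = 0) :
    |u1 * (p14 + p23) + u2 * (p12 + p34) + u3 * (p13 - p24)|
      ≤ √(u1^2 + u2^2 + u3^2) * √(p12^2 + p13^2 + p14^2 + p23^2 + p24^2 + p34^2) := by
  have hnorm : (p14 + p23)^2 + (p12 + p34)^2 + (p13 - p24)^2
      = p12^2 + p13^2 + p14^2 + p23^2 + p24^2 + p34^2 := by
    linear_combination 2 * h
  rw [← hnorm, ← Real.sqrt_mul (by positivity)]
  apply Real.abs_le_sqrt
  simpa [Fin.sum_univ_three] using
    Finset.sum_mul_sq_le_sq_mul_sq Finset.univ ![u1, u2, u3] ![p14 + p23, p12 + p34, p13 - p24]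

/-- With `X = X₁ + X₂`, `Y = Y₁ + Y₂` as in Section 4, the `𝔥₂`-component of the
commutator is `[X,Y]₂ = [X₁,Y₂] + [X₂,Y₁]`, and
`B([X,Y]₂,[X,Y]₂) = -2z² + B([X₁,Y₁],[X₂,Y₂]₁)` where
`z² = Σ_{i∈{2,3,4}, j∈{1,…,4}} (aᵢdⱼ - cᵢbⱼ)²` and `[X₂,Y₂]₁` is the
`𝔥₁`-part `Z₁` of the decomposition `[X₂,Y₂] = Z₀ + Z₁`.  By Cauchy–Schwarz,
`B([X₁,Y₁],[X₂,Y₂]₁) ≤ √(8x²·2y²) = 4xy`, whence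
`B([X,Y]₂,[X,Y]₂) ≤ -2z² + 4xy`. -/
theorem su21_h2_component (a2 a3 a4 b1 b2 b3 b4 c2 c3 c4 d1 d2 d3 d4 : ℝ) :
    ∀ Z0 Z1 : Matrix (Fin 3) (Fin 3) ℂ, Z0 ∈ h0 → Z1 ∈ h1 →
      ⁅b1 • f1 + b2 • f2 + b3 • f3 + b4 • f4,
        d1 • f1 + d2 • f2 + d3 • f3 + d4 • f4⁆ = Z0 + Z1 →
      (Bform (⁅a2 • e2 + a3 • e3 + a4 • e4, d1 • f1 + d2 • f2 + d3 • f3 + d4 • f4⁆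
            + ⁅b1 • f1 + b2 • f2 + b3 • f3 + b4 • f4, c2 • e2 + c3 • e3 + c4 • e4⁆)
          (⁅a2 • e2 + a3 • e3 + a4 • e4, d1 • f1 + d2 • f2 + d3 • f3 + d4 • f4⁆
            + ⁅b1 • f1 + b2 • f2 + b3 • f3 + b4 • f4, c2 • e2 + c3 • e3 + c4 • e4⁆)
        = -2 * ((a2*d1 - c2*b1)^2 + (a2*d2 - c2*b2)^2 + (a2*d3 - c2*b3)^2
            + (a2*d4 - c2*b4)^2
            + (a3*d1 - c3*b1)^2 + (a3*d2 - c3*b2)^2 + (a3*d3 - c3*b3)^2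
            + (a3*d4 - c3*b4)^2
            + (a4*d1 - c4*b1)^2 + (a4*d2 - c4*b2)^2 + (a4*d3 - c4*b3)^2
            + (a4*d4 - c4*b4)^2)
          + Bform ⁅a2 • e2 + a3 • e3 + a4 • e4, c2 • e2 + c3 • e3 + c4 • e4⁆ Z1) ∧
      (Bform (⁅a2 • e2 + a3 • e3 + a4 • e4, d1 • f1 + d2 • f2 + d3 • f3 + d4 • f4⁆
            + ⁅b1 • f1 + b2 • f2 + b3 • f3 + b4 • f4, c2 • e2 + c3 • e3 + c4 • e4⁆)
          (⁅a2 • e2 + a3 • e3 + a4 • e4, d1 • f1 + d2 • f2 + d3 • f3 + d4 • f4⁆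
            + ⁅b1 • f1 + b2 • f2 + b3 • f3 + b4 • f4, c2 • e2 + c3 • e3 + c4 • e4⁆)
        ≤ -2 * ((a2*d1 - c2*b1)^2 + (a2*d2 - c2*b2)^2 + (a2*d3 - c2*b3)^2
            + (a2*d4 - c2*b4)^2
            + (a3*d1 - c3*b1)^2 + (a3*d2 - c3*b2)^2 + (a3*d3 - c3*b3)^2
            + (a3*d4 - c3*b4)^2
            + (a4*d1 - c4*b1)^2 + (a4*d2 - c4*b2)^2 + (a4*d3 - c4*b3)^2
            + (a4*d4 - c4*b4)^2)
          + 4 * Real.sqrt ((a2*c3 - a3*c2)^2 + (a2*c4 - a4*c2)^2 + (a3*c4 - a4*c3)^2)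
              * Real.sqrt ((b1*d2 - b2*d1)^2 + (b1*d3 - b3*d1)^2 + (b1*d4 - b4*d1)^2
                + (b2*d3 - b3*d2)^2 + (b2*d4 - b4*d2)^2 + (b3*d4 - b4*d3)^2)) := by
  intro Z0 Z1 hZ0 _ hZ
  have hZ1 : Bform ⁅h1Elem a2 a3 a4, h1Elem c2 c3 c4⁆ Z1
      = Bform ⁅h1Elem a2 a3 a4, h1Elem c2 c3 c4⁆ ⁅h2Elem b1 b2 b3 b4, h2Elem d1 d2 d3 d4⁆ := by
    rw [show ⁅h2Elem b1 b2 b3 b4, h2Elem d1 d2 d3 d4⁆ = Z0 + Z1 from hZ, Bform_add_right,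
      lie_h1Elem_h1Elem, Bform_h1Elem_of_mem_h0 _ _ _ hZ0, zero_add]
  have hB := Bform_h2Component_self a2 a3 a4 c2 c3 c4 b1 b2 b3 b4 d1 d2 d3 d4
  refine ⟨hZ1 ▸ hB, hB.trans_le ?_⟩
  have hCS := (neg_le_abs _).trans <| abs_inner_le_of_plucker (a2*c3 - a3*c2) (a2*c4 - a4*c2)
    (a3*c4 - a4*c3) (plucker_relation b1 b2 b3 b4 d1 d2 d3 d4)
  rw [Bform_lie_h1Elem_lie_h2Elem]
  linarith
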